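/- (Fricke–Klein–Vogt) For every regular function f : SL(2,ℂ) × SL(2,ℂ) → ℂ satisfying f(gx₁g⁻¹, gx₂g⁻¹) = f(x₁, x₂) for all g, x₁, x₂ ∈ SL(2,ℂ), there exists a unique polynomial p in three variables over ℂ such that f(x₁, x₂) = p(tr(x₁), tr(x₂), tr(x₁x₂⁻¹)) for all x₁, x₂ ∈ SL(2,ℂ). -/

import Mathlib

open Matrix

noncomputable section

abbrev SL2 : Type := Matrix.SpecialLinearGroup (Fin 2) ℂ

/-- A function `f : SL(2,ℂ) × SL(2,ℂ) → ℂ` is regular if it is given by a polynomial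
in the eight matrix entries. -/
def IsRegularFn2 (f : SL2 → SL2 → ℂ) : Prop :=
  ∃ P : MvPolynomial (Fin 8) ℂ,
    ∀ A B : SL2, f A B = MvPolynomial.eval
      ![A.1 0 0, A.1 0 1, A.1 1 0, A.1 1 1, B.1 0 0, B.1 0 1, B.1 1 0, B.1 1 1] P

open MvPolynomial Finset

namespace FKV

lemma exists_sqrt (z : ℂ) : ∃ w : ℂ, w * w = z := by
  obtain ⟨w, hw⟩ := IsAlgClosed.exists_pow_nat_eq z (n := 2) two_pos
  exact ⟨w, by rw [← hw]; ring⟩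

lemma vec3_eta (v : Fin 3 → ℂ) : ![v 0, v 1, v 2] = v := by
  funext i; fin_cases i <;> rfl

lemma dense {n : ℕ} (V W : MvPolynomial (Fin n) ℂ) (hW : W ≠ 0)
    (h : ∀ v, eval v W ≠ 0 → eval v V = 0) : V = 0 := by
  have h0 : W * V = 0 := by
    apply MvPolynomial.funext
    intro v
    rw [_root_.map_mul, map_zero]
    by_cases hv : eval v W = 0
    · rw [hv, zero_mul]
    · rw [h v hv, mul_zero]
  rcases mul_eq_zero.mp h0 with h' | h'
  · exact absurd h' hW
  · exact h'


@[simp] lemma c3_2 {α : Type*} (x y b : α) : ![x, y, b] 2 = b := rfl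
@[simp] lemma c4_2 {α : Type*} (x y b c : α) : ![x, y, b, c] 2 = b := rfl
@[simp] lemma c4_3 {α : Type*} (x y b c : α) : ![x, y, b, c] 3 = c := rfl
@[simp] lemma c8_2 {α : Type*} (a₀ a₁ a₂ a₃ a₄ a₅ a₆ a₇ : α) :
    ![a₀, a₁, a₂, a₃, a₄, a₅, a₆, a₇] 2 = a₂ := rfl
@[simp] lemma c8_3 {α : Type*} (a₀ a₁ a₂ a₃ a₄ a₅ a₆ a₇ : α) :
    ![a₀, a₁, a₂, a₃, a₄, a₅, a₆, a₇] 3 = a₃ := rfl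
@[simp] lemma c8_4 {α : Type*} (a₀ a₁ a₂ a₃ a₄ a₅ a₆ a₇ : α) :
    ![a₀, a₁, a₂, a₃, a₄, a₅, a₆, a₇] 4 = a₄ := rfl
@[simp] lemma c8_5 {α : Type*} (a₀ a₁ a₂ a₃ a₄ a₅ a₆ a₇ : α) :
    ![a₀, a₁, a₂, a₃, a₄, a₅, a₆, a₇] 5 = a₅ := rfl
@[simp] lemma c8_6 {α : Type*} (a₀ a₁ a₂ a₃ a₄ a₅ a₆ a₇ : α) :
    ![a₀, a₁, a₂, a₃, a₄, a₅, a₆, a₇] 6 = a₆ := rfl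
@[simp] lemma c8_7 {α : Type*} (a₀ a₁ a₂ a₃ a₄ a₅ a₆ a₇ : α) :
    ![a₀, a₁, a₂, a₃, a₄, a₅, a₆, a₇] 7 = a₇ := rfl

lemma eval_congr {n : ℕ} (v w : Fin n → ℂ) (P : MvPolynomial (Fin n) ℂ) (h : v = w) :
    eval v P = eval w P := by rw [h]

lemma aeval_eq_eval {n : ℕ} (v : Fin n → ℂ) (p : MvPolynomial (Fin n) ℂ) :
    aeval v p = eval v p := by
  rw [aeval_def, Algebra.algebraMap_self]; rfl

lemma eval_bind₁ {m n : ℕ} (v : Fin n → ℂ) (g : Fin m → MvPolynomial (Fin n) ℂ)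
    (P : MvPolynomial (Fin m) ℂ) :
    eval v (bind₁ g P) = eval (fun i => eval v (g i)) P := by
  rw [← aeval_eq_eval v, aeval_bind₁]
  simp only [aeval_eq_eval]

lemma quad_root (α β γ : ℂ) :
    ∃ u v : ℂ, ¬(u = 0 ∧ v = 0) ∧ α * u ^ 2 + β * u * v + γ * v ^ 2 = 0 := by
  by_cases hα : α = 0
  · exact ⟨1, 0, by simp, by simp [hα]⟩
  · obtain ⟨s, hs⟩ := exists_sqrt (β ^ 2 - 4 * α * γ)
    refine ⟨-β + s, 2 * α, fun h => hα (by simpa using h.2), ?_⟩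
    linear_combination α * hs

lemma exists_b (z : ℂ) : ∃ b : ℂ, b ≠ 0 ∧ b + b⁻¹ = z := by
  obtain ⟨s, hs⟩ := exists_sqrt (z ^ 2 - 4)
  have hmul : (z + s) / 2 * ((z - s) / 2) = 1 := by linear_combination (-1/4 : ℂ) * hs
  have hb : (z + s) / 2 ≠ 0 := by
    intro h; rw [h, zero_mul] at hmul; exact one_ne_zero hmul.symm
  have hinv : ((z + s) / 2)⁻¹ = (z - s) / 2 :=
    inv_eq_of_mul_eq_one_right hmul
  exact ⟨(z + s) / 2, hb, by rw [hinv]; ring⟩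


-- ## slice matrices
def Asl (x : ℂ) : SL2 := ⟨!![x, -1; 1, 0], by simp [Matrix.det_fin_two_of]⟩

def Csl (y b : ℂ) : SL2 :=
  if hb : b = 0 then 1 else ⟨!![y, -b; b⁻¹, 0], by
    simp [Matrix.det_fin_two_of]
    field_simp⟩

lemma Csl_coe {y b : ℂ} (hb : b ≠ 0) :
    (Csl y b : Matrix (Fin 2) (Fin 2) ℂ) = !![y, -b; b⁻¹, 0] := by
  rw [Csl]; erw [dif_neg hb]

-- ## scaling a matrix with nonzero det into SL2
lemma exists_S (T : Matrix (Fin 2) (Fin 2) ℂ) (hT : det T ≠ 0) :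
    ∃ S : SL2, ∃ c : ℂ, (S : Matrix (Fin 2) (Fin 2) ℂ) = c • T := by
  obtain ⟨l, hl⟩ := exists_sqrt (det T)⁻¹
  refine ⟨⟨l • T, ?_⟩, l, rfl⟩
  rw [det_smul]
  simp only [Fintype.card_fin]
  rw [show l ^ 2 = l * l by ring, hl]
  exact inv_mul_cancel₀ hT

lemma conj_of {T : Matrix (Fin 2) (Fin 2) ℂ} {S : SL2} {c : ℂ}
    (hc : (S : Matrix (Fin 2) (Fin 2) ℂ) = c • T) {M A : SL2}
    (h : (M : Matrix (Fin 2) (Fin 2) ℂ) * T = T * A) :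
    S⁻¹ * M * S = A := by
  have hmul : M * S = S * A := by
    apply Subtype.ext
    show (M : Matrix (Fin 2) (Fin 2) ℂ) * S = (S : Matrix (Fin 2) (Fin 2) ℂ) * A
    rw [hc, Matrix.mul_smul, Matrix.smul_mul, h]
  calc S⁻¹ * M * S = S⁻¹ * (M * S) := by group
    _ = S⁻¹ * (S * A) := by rw [hmul]
    _ = A := by group

lemma conj_eq (f : SL2 → SL2 → ℂ)
    (hinv : ∀ g x₁ x₂ : SL2, f (g * x₁ * g⁻¹) (g * x₂ * g⁻¹) = f x₁ x₂)
    {M N A C : SL2} (T : Matrix (Fin 2) (Fin 2) ℂ) (hT : det T ≠ 0)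
    (h1 : (M : Matrix (Fin 2) (Fin 2) ℂ) * T = T * A)
    (h2 : (N : Matrix (Fin 2) (Fin 2) ℂ) * T = T * C) :
    f M N = f A C := by
  obtain ⟨S, c, hc⟩ := exists_S T hT
  have e1 := conj_of hc h1
  have e2 := conj_of hc h2
  have := hinv S⁻¹ M N
  rw [inv_inv] at this
  rw [← this, e1, e2]

-- ## clearing denominators
lemma exp_le {R : MvPolynomial (Fin 4) ℂ} {m : Fin 4 →₀ ℕ} (hm : m ∈ R.support) (i : Fin 4) :
    m i ≤ R.totalDegree := by
  refine le_trans ?_ (MvPolynomial.le_totalDegree hm)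
  rw [Finsupp.sum]
  by_cases h : i ∈ m.support
  · exact Finset.single_le_sum (fun _ _ => Nat.zero_le _) h
  · simp [Finsupp.notMem_support_iff.mp h]

lemma clear (R : MvPolynomial (Fin 4) ℂ) :
    ∃ (N : ℕ) (a : ℕ → MvPolynomial (Fin 2) ℂ), ∀ x y b : ℂ, b ≠ 0 →
      b ^ N * eval ![x, y, b, b⁻¹] R
        = ∑ k ∈ Finset.range (2 * N + 1), eval ![x, y] (a k) * b ^ k := by
  classical
  set N := R.totalDegree with hN
  refine ⟨N, fun k => ∑ m ∈ R.support.filter (fun m => N + m 2 - m 3 = k),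
      MvPolynomial.C (coeff m R) * X 0 ^ m 0 * X 1 ^ m 1, ?_⟩
  intro x y b hb
  have hmaps : ∀ m ∈ R.support, N + m 2 - m 3 ∈ Finset.range (2 * N + 1) := by
    intro m hm
    have h2 := exp_le hm 2
    simp only [Finset.mem_range]
    omega
  calc b ^ N * eval ![x, y, b, b⁻¹] R
      = ∑ m ∈ R.support, coeff m R * x ^ m 0 * y ^ m 1 * b ^ (N + m 2 - m 3) := by
        rw [eval_eq', Finset.mul_sum]
        refine Finset.sum_congr rfl fun m hm => ?_
        have h3 := exp_le hm 3
        have hpow : b ^ (N + m 2 - m 3) * b ^ m 3 = b ^ N * b ^ m 2 := by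
          rw [← pow_add, ← pow_add]; congr 1; omega
        rw [Fin.prod_univ_four]
        simp only [Matrix.cons_val_zero, Matrix.cons_val_one, Matrix.head_cons,
          Matrix.cons_val_two, Matrix.tail_cons, Matrix.cons_val_three]
        have hk : b ^ m 3 * b⁻¹ ^ m 3 = 1 := by rw [← mul_pow, mul_inv_cancel₀ hb, one_pow]
        field_simp
        linear_combination (-(coeff m R * x ^ m 0 * y ^ m 1) * b⁻¹ ^ m 3) * hpow
          + (coeff m R * x ^ m 0 * y ^ m 1 * b ^ (N + m 2 - m 3)) * hk
    _ = ∑ k ∈ Finset.range (2 * N + 1), ∑ m ∈ R.support.filter (fun m => N + m 2 - m 3 = k),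
          coeff m R * x ^ m 0 * y ^ m 1 * b ^ (N + m 2 - m 3) :=
        (Finset.sum_fiberwise_of_maps_to hmaps _).symm
    _ = ∑ k ∈ Finset.range (2 * N + 1), eval ![x, y] (∑ m ∈ R.support.filter
          (fun m => N + m 2 - m 3 = k), MvPolynomial.C (coeff m R) * X 0 ^ m 0 * X 1 ^ m 1)
          * b ^ k := by
        refine Finset.sum_congr rfl fun k _ => ?_
        rw [map_sum, Finset.sum_mul]
        refine Finset.sum_congr rfl fun m hm => ?_
        rw [Finset.mem_filter] at hm
        simp only [_root_.map_mul, map_pow, eval_C, eval_X, Matrix.cons_val_zero,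
          Matrix.cons_val_one, Matrix.head_cons]
        rw [hm.2]


-- ## the slice function
def q (f : SL2 → SL2 → ℂ) (x y b : ℂ) : ℂ := f (Asl x) (Csl y b)

lemma exists_R (f : SL2 → SL2 → ℂ) (hf : IsRegularFn2 f) :
    ∃ R : MvPolynomial (Fin 4) ℂ, ∀ x y b : ℂ, b ≠ 0 →
      q f x y b = eval ![x, y, b, b⁻¹] R := by
  obtain ⟨P, hP⟩ := hf
  refine ⟨bind₁ ![X 0, -1, 1, 0, X 1, -(X 2), X 3, 0] P, ?_⟩
  intro x y b hb
  rw [q, hP, eval_bind₁]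
  refine eval_congr _ _ _ ?_
  funext i
  fin_cases i <;> simp [Asl, Csl_coe hb]

def ddp : MvPolynomial (Fin 3) ℂ :=
  X 2 ^ 2 * (X 1 - X 2 * X 0) ^ 2 + (X 1 - X 2 * X 0) * X 0 * (X 2 ^ 2 - 1) * X 2
    + (X 2 ^ 2 - 1) ^ 2

lemma sym_raw (f : SL2 → SL2 → ℂ)
    (hinv : ∀ g x₁ x₂ : SL2, f (g * x₁ * g⁻¹) (g * x₂ * g⁻¹) = f x₁ x₂)
    (x y b : ℂ) (hb : b ≠ 0) (hd : eval ![x, y, b] ddp ≠ 0) :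
    q f x y b = q f x y b⁻¹ := by
  have hbi : b⁻¹ ≠ 0 := inv_ne_zero hb
  set u : ℂ := y - b * x with hu
  set v : ℂ := b - b⁻¹ with hv
  set T : Matrix (Fin 2) (Fin 2) ℂ := !![u + v * x, -v; v, u] with hT
  have hdd : eval ![x, y, b] ddp = b ^ 2 * det T := by
    rw [hT, det_fin_two_of, ddp, hu, hv]
    simp only [_root_.map_mul, map_add, map_sub, map_pow, _root_.map_one, eval_X,
      Matrix.cons_val_zero, Matrix.cons_val_one, Matrix.head_cons, c3_2]
    field_simp
    ring
  have hdT : det T ≠ 0 := by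
    intro h0
    rw [hdd, h0, mul_zero] at hd
    exact hd rfl
  have h1 : ((Asl x : SL2) : Matrix (Fin 2) (Fin 2) ℂ) * T = T * (Asl x : SL2) := by
    show (!![x, -1; 1, 0] : Matrix (Fin 2) (Fin 2) ℂ) * T = T * !![x, -1; 1, 0]
    rw [hT]
    ext i j
    fin_cases i <;> fin_cases j <;> simp [Matrix.mul_fin_two] <;> ring
  have h2 : ((Csl y b⁻¹ : SL2) : Matrix (Fin 2) (Fin 2) ℂ) * T
      = T * (Csl y b : SL2) := by
    rw [Csl_coe hb, Csl_coe hbi, inv_inv, hT]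
    ext i j
    fin_cases i <;> fin_cases j <;>
      simp [Matrix.mul_fin_two, hu, hv] <;> field_simp <;> ring
  show f (Asl x) (Csl y b) = f (Asl x) (Csl y b⁻¹)
  exact (conj_eq f hinv T hdT h1 h2).symm

lemma sym (f : SL2 → SL2 → ℂ) (hf : IsRegularFn2 f)
    (hinv : ∀ g x₁ x₂ : SL2, f (g * x₁ * g⁻¹) (g * x₂ * g⁻¹) = f x₁ x₂) :
    ∀ x y b : ℂ, b ≠ 0 → q f x y b = q f x y b⁻¹ := by
  obtain ⟨R, hR⟩ := exists_R f hf
  set R' : MvPolynomial (Fin 4) ℂ := bind₁ ![X 0, X 1, X 3, X 2] R with hR'def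
  have hR' : ∀ x y b : ℂ, b ≠ 0 → q f x y b⁻¹ = eval ![x, y, b, b⁻¹] R' := by
    intro x y b hb
    rw [hR x y b⁻¹ (inv_ne_zero hb), inv_inv, hR'def, eval_bind₁]
    refine eval_congr _ _ _ ?_
    funext i
    fin_cases i <;> simp
  obtain ⟨N₁, a₁, hc₁⟩ := clear R
  obtain ⟨N₂, a₂, hc₂⟩ := clear R'
  set g2 : Fin 2 → Fin 3 := ![0, 1] with hg2
  have hW : ∀ (a : ℕ → MvPolynomial (Fin 2) ℂ) (n : ℕ) (x y b : ℂ),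
      eval ![x, y, b] (∑ k ∈ Finset.range n, rename g2 (a k) * X 2 ^ k)
        = ∑ k ∈ Finset.range n, eval ![x, y] (a k) * b ^ k := by
    intro a n x y b
    rw [map_sum]
    refine Finset.sum_congr rfl fun k _ => ?_
    rw [_root_.map_mul, map_pow, eval_X, eval_rename]
    have hcomp : (![x, y, b] ∘ g2) = ![x, y] := by
      funext i; fin_cases i <;> rfl
    rw [hcomp]
    norm_num
  set W₁ := ∑ k ∈ Finset.range (2 * N₁ + 1), rename g2 (a₁ k) * X 2 ^ k with hW₁
  set W₂ := ∑ k ∈ Finset.range (2 * N₂ + 1), rename g2 (a₂ k) * X 2 ^ k with hW₂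
  have hXD : (X 2 * ddp : MvPolynomial (Fin 3) ℂ) ≠ 0 := by
    intro h0
    have h1 := congrArg (eval ![0, 1, 2]) h0
    rw [_root_.map_mul, map_zero, eval_X] at h1
    rw [ddp] at h1
    simp only [_root_.map_mul, map_add, map_sub, map_pow, _root_.map_one, eval_X,
      Matrix.cons_val_zero, Matrix.cons_val_one, Matrix.head_cons, c3_2] at h1
    norm_num at h1
  have hV : W₁ * X 2 ^ N₂ - W₂ * X 2 ^ N₁ = 0 := by
    apply dense _ (X 2 * ddp) hXD
    intro v hv
    rw [← vec3_eta v] at hv ⊢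
    set x := v 0
    set y := v 1
    set b := v 2
    rw [_root_.map_mul, eval_X] at hv
    simp only [c3_2] at hv
    have hb : b ≠ 0 := fun h => hv (by rw [h, zero_mul])
    have hd : eval ![x, y, b] ddp ≠ 0 := fun h => hv (by rw [h, mul_zero])
    have e₁ : eval ![x, y, b] W₁ = b ^ N₁ * q f x y b := by
      rw [hW₁, hW a₁ _ x y b, ← hc₁ x y b hb, hR x y b hb]
    have e₂ : eval ![x, y, b] W₂ = b ^ N₂ * q f x y b⁻¹ := by
      rw [hW₂, hW a₂ _ x y b, ← hc₂ x y b hb, hR' x y b hb]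
    rw [map_sub, _root_.map_mul, _root_.map_mul, map_pow, map_pow, eval_X]
    simp only [c3_2]
    rw [e₁, e₂, sym_raw f hinv x y b hb hd]
    ring
  intro x y b hb
  have h1 := congrArg (eval ![x, y, b]) hV
  rw [map_sub, _root_.map_mul, _root_.map_mul, map_pow, map_pow, eval_X, map_zero] at h1
  simp only [c3_2] at h1
  have e₁ : eval ![x, y, b] W₁ = b ^ N₁ * q f x y b := by
    rw [hW₁, hW a₁ _ x y b, ← hc₁ x y b hb, hR x y b hb]
  have e₂ : eval ![x, y, b] W₂ = b ^ N₂ * q f x y b⁻¹ := by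
    rw [hW₂, hW a₂ _ x y b, ← hc₂ x y b hb, hR' x y b hb]
  rw [e₁, e₂, sub_eq_zero] at h1
  have hbn1 : (b : ℂ) ^ N₁ ≠ 0 := pow_ne_zero _ hb
  have hbn2 : (b : ℂ) ^ N₂ ≠ 0 := pow_ne_zero _ hb
  have h2 : b ^ N₁ * b ^ N₂ * q f x y b = b ^ N₁ * b ^ N₂ * q f x y b⁻¹ := by
    linear_combination h1
  exact mul_left_cancel₀ (mul_ne_zero hbn1 hbn2) h2


-- ## symmetric Laurent to Dickson
lemma pow_sym {b : ℂ} (hb : b ≠ 0) (k N : ℕ) :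
    b ^ k * (b⁻¹) ^ N + (b⁻¹) ^ k * b ^ N
      = b ^ Nat.dist k N + (b⁻¹) ^ Nat.dist k N := by
  have hk : b ^ min k N * (b⁻¹) ^ min k N = 1 := by
    rw [← mul_pow, mul_inv_cancel₀ hb, one_pow]
  rcases le_total k N with h | h
  · rw [Nat.dist_eq_sub_of_le h]
    have h1 : b ^ N = b ^ (N - k) * b ^ k := by rw [← pow_add]; congr 1; omega
    have h2 : (b⁻¹) ^ N = (b⁻¹) ^ (N - k) * (b⁻¹) ^ k := by rw [← pow_add]; congr 1; omega
    rw [h1, h2, min_eq_left h] at *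
    linear_combination ((b⁻¹) ^ (N - k) + b ^ (N - k)) * hk
  · rw [Nat.dist_eq_sub_of_le_right h]
    have h1 : b ^ k = b ^ (k - N) * b ^ N := by rw [← pow_add]; congr 1; omega
    have h2 : (b⁻¹) ^ k = (b⁻¹) ^ (k - N) * (b⁻¹) ^ N := by rw [← pow_add]; congr 1; omega
    rw [h1, h2, min_eq_right h] at *
    linear_combination (b ^ (k - N) + (b⁻¹) ^ (k - N)) * hk

lemma eval_dickX2 (v : Fin 3 → ℂ) (d : Polynomial ℂ) :
    eval v (Polynomial.aeval (X 2 : MvPolynomial (Fin 3) ℂ) d) = Polynomial.eval (v 2) d := by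
  rw [Polynomial.aeval_def, Polynomial.hom_eval₂]
  have h1 : (MvPolynomial.eval v).comp (algebraMap ℂ (MvPolynomial (Fin 3) ℂ))
      = RingHom.id ℂ := by
    ext r
    simp [MvPolynomial.algebraMap_eq]
  rw [h1, eval_X]
  rfl

lemma slice_poly (f : SL2 → SL2 → ℂ) (hf : IsRegularFn2 f)
    (hinv : ∀ g x₁ x₂ : SL2, f (g * x₁ * g⁻¹) (g * x₂ * g⁻¹) = f x₁ x₂) :
    ∃ p : MvPolynomial (Fin 3) ℂ, ∀ x y b : ℂ, b ≠ 0 →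
      q f x y b = eval ![x, y, b + b⁻¹] p := by
  obtain ⟨R, hR⟩ := exists_R f hf
  obtain ⟨N, a, hc⟩ := clear R
  refine ⟨MvPolynomial.C (1/2 : ℂ) * ∑ k ∈ Finset.range (2 * N + 1),
    rename (![0, 1] : Fin 2 → Fin 3) (a k)
      * Polynomial.aeval (X 2) (Polynomial.dickson 1 (1 : ℂ) (Nat.dist k N)), ?_⟩
  intro x y b hb
  have hbi : b⁻¹ ≠ 0 := inv_ne_zero hb
  have h1 : b ^ N * q f x y b
      = ∑ k ∈ Finset.range (2 * N + 1), eval ![x, y] (a k) * b ^ k := by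
    rw [hR x y b hb]; exact hc x y b hb
  have h2 : (b⁻¹) ^ N * q f x y b⁻¹
      = ∑ k ∈ Finset.range (2 * N + 1), eval ![x, y] (a k) * (b⁻¹) ^ k := by
    have := hc x y b⁻¹ hbi
    rw [inv_inv] at this
    rw [hR x y b⁻¹ hbi, inv_inv]
    exact this
  have hsym := sym f hf hinv x y b hb
  rw [_root_.map_mul, eval_C, map_sum]
  have hterm : ∀ k ∈ Finset.range (2 * N + 1),
      eval ![x, y, b + b⁻¹] (rename (![0, 1] : Fin 2 → Fin 3) (a k)
        * Polynomial.aeval (X 2) (Polynomial.dickson 1 (1 : ℂ) (Nat.dist k N)))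
      = eval ![x, y] (a k) * (b ^ Nat.dist k N + (b⁻¹) ^ Nat.dist k N) := by
    intro k _
    rw [_root_.map_mul, eval_rename, eval_dickX2]
    have hcomp : (![x, y, b + b⁻¹] ∘ (![0, 1] : Fin 2 → Fin 3)) = ![x, y] := by
      funext i; fin_cases i <;> rfl
    rw [hcomp]
    have h2' : (![x, y, b + b⁻¹] : Fin 3 → ℂ) 2 = b + b⁻¹ := rfl
    rw [h2', Polynomial.dickson_one_one_eval_add_inv b b⁻¹ (mul_inv_cancel₀ hb)]
  rw [Finset.sum_congr rfl hterm]
  have hsum : ∑ k ∈ Finset.range (2 * N + 1),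
        eval ![x, y] (a k) * (b ^ Nat.dist k N + (b⁻¹) ^ Nat.dist k N)
      = (b⁻¹) ^ N * (∑ k ∈ Finset.range (2 * N + 1), eval ![x, y] (a k) * b ^ k)
        + b ^ N * (∑ k ∈ Finset.range (2 * N + 1), eval ![x, y] (a k) * (b⁻¹) ^ k) := by
    rw [Finset.mul_sum, Finset.mul_sum, ← Finset.sum_add_distrib]
    refine Finset.sum_congr rfl fun k _ => ?_
    rw [← pow_sym hb k N]
    ring
  rw [hsum, ← h1, ← h2, ← hsym]
  have hbN : b ^ N * (b⁻¹) ^ N = 1 := by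
    rw [← mul_pow, mul_inv_cancel₀ hb, one_pow]
  linear_combination (-(q f x y b)) * hbN


-- ## reduction of a good pair to the slice
lemma trace_conj (S K : SL2) :
    trace ((S * K * S⁻¹ : SL2) : Matrix (Fin 2) (Fin 2) ℂ)
      = trace ((K : SL2) : Matrix (Fin 2) (Fin 2) ℂ) := by
  rw [Matrix.SpecialLinearGroup.coe_mul, Matrix.SpecialLinearGroup.coe_mul, Matrix.trace_mul_comm,
    ← Matrix.mul_assoc, ← Matrix.SpecialLinearGroup.coe_mul, inv_mul_cancel,
    Matrix.SpecialLinearGroup.coe_one, Matrix.one_mul]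

lemma third_trace (x y b : ℂ) (hb : b ≠ 0) :
    trace (((Asl x) * (Csl y b)⁻¹ : SL2) : Matrix (Fin 2) (Fin 2) ℂ) = b + b⁻¹ := by
  rw [Matrix.SpecialLinearGroup.coe_mul, Matrix.SpecialLinearGroup.coe_inv, Csl_coe hb,
    Matrix.adjugate_fin_two_of]
  show trace (!![x, -1; 1, 0] * !![0, -(-b); -(b⁻¹), y]) = b + b⁻¹
  rw [Matrix.mul_fin_two, Matrix.trace_fin_two_of]
  ring

lemma key_h1 (m00 m01 m10 m11 w0 w1 : ℂ) (h : m00 * m11 - m01 * m10 = 1) :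
    !![m00, m01; m10, m11] * !![-(m00 * w0 + m01 * w1), w0; -(m10 * w0 + m11 * w1), w1]
      = !![-(m00 * w0 + m01 * w1), w0; -(m10 * w0 + m11 * w1), w1]
        * !![m00 + m11, -1; 1, 0] := by
  ext i j
  fin_cases i <;> fin_cases j <;> simp [Matrix.mul_fin_two]
  · linear_combination (w0) * h
  · linear_combination (w1) * h
  
lemma key_h2 (n00 n01 n10 n11 w0 w1 b c mw0 mw1 : ℂ)
    (hdN : n00 * n11 - n01 * n10 = 1)
    (hmw0 : mw0 = c * (n00 * w0 + n01 * w1)) (hmw1 : mw1 = c * (n10 * w0 + n11 * w1))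
    (hb0 : n00 * w0 + n01 * w1 = b * mw0) (hb1 : n10 * w0 + n11 * w1 = b * mw1) :
    !![n00, n01; n10, n11] * !![-mw0, w0; -mw1, w1]
      = !![-mw0, w0; -mw1, w1] * !![n00 + n11, -b; c, 0] := by
  ext i j
  fin_cases i <;> fin_cases j <;> simp [Matrix.mul_fin_two]
  · rw [hmw0, hmw1]; linear_combination (c * w0) * hdN
  · linear_combination hb0
  · rw [hmw0, hmw1]; linear_combination (c * w1) * hdN
  · linear_combination hb1

lemma reduce (f : SL2 → SL2 → ℂ)
    (hinv : ∀ g x₁ x₂ : SL2, f (g * x₁ * g⁻¹) (g * x₂ * g⁻¹) = f x₁ x₂)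
    (p : MvPolynomial (Fin 3) ℂ)
    (hp : ∀ x y b : ℂ, b ≠ 0 → q f x y b = eval ![x, y, b + b⁻¹] p)
    (M N : SL2) (w : Fin 2 → ℂ)
    (hδ : (M.1.mulVec w 1) * (N.1.mulVec w 0) = (M.1.mulVec w 0) * (N.1.mulVec w 1))
    (hgood : (M.1.mulVec w 0) * w 1 ≠ (M.1.mulVec w 1) * w 0) :
    f M N = eval ![trace (M : Matrix (Fin 2) (Fin 2) ℂ),
      trace (N : Matrix (Fin 2) (Fin 2) ℂ),
      trace ((M * N⁻¹ : SL2) : Matrix (Fin 2) (Fin 2) ℂ)] p := by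
  have hdM : M.1 0 0 * M.1 1 1 - M.1 0 1 * M.1 1 0 = 1 := by
    have := M.2; rwa [Matrix.det_fin_two] at this
  have hdN : N.1 0 0 * N.1 1 1 - N.1 0 1 * N.1 1 0 = 1 := by
    have := N.2; rwa [Matrix.det_fin_two] at this
  have hMw : ∀ i, M.1.mulVec w i = M.1 i 0 * w 0 + M.1 i 1 * w 1 := by
    intro i; simp [Matrix.mulVec, dotProduct, Fin.sum_univ_two]
  have hNw : ∀ i, N.1.mulVec w i = N.1 i 0 * w 0 + N.1 i 1 * w 1 := by
    intro i; simp [Matrix.mulVec, dotProduct, Fin.sum_univ_two]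
  rw [hMw 0, hMw 1] at hgood
  rw [hMw 0, hMw 1, hNw 0, hNw 1] at hδ
  set m00 := M.1 0 0
  set m01 := M.1 0 1
  set m10 := M.1 1 0
  set m11 := M.1 1 1
  set n00 := N.1 0 0
  set n01 := N.1 0 1
  set n10 := N.1 1 0
  set n11 := N.1 1 1
  set w0 := w 0
  set w1 := w 1
  set mw0 := m00 * w0 + m01 * w1 with hmw0def
  set mw1 := m10 * w0 + m11 * w1 with hmw1def
  set nw0 := n00 * w0 + n01 * w1 with hnw0def
  set nw1 := n10 * w0 + n11 * w1 with hnw1def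
  have hMwne : ¬(mw0 = 0 ∧ mw1 = 0) := by
    rintro ⟨ha, hb'⟩; exact hgood (by rw [ha, hb']; ring)
  set b : ℂ := if mw0 = 0 then nw1 / mw1 else nw0 / mw0 with hbdef
  have hb01 : nw0 = b * mw0 ∧ nw1 = b * mw1 := by
    by_cases h0 : mw0 = 0
    · have h1 : mw1 ≠ 0 := fun h => hMwne ⟨h0, h⟩
      rw [hbdef, if_pos h0]
      constructor
      · rw [h0, mul_zero]
        have h2 : mw1 * nw0 = 0 := by rw [hδ, h0]; ring
        rcases mul_eq_zero.mp h2 with h | h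
        · exact absurd h h1
        · exact h
      · field_simp
    · rw [hbdef, if_neg h0]
      constructor
      · field_simp
      · field_simp
        linear_combination -hδ
  have hbne : b ≠ 0 := by
    intro hb0'
    have hN0 : nw0 = 0 := by rw [hb01.1, hb0', zero_mul]
    have hN1 : nw1 = 0 := by rw [hb01.2, hb0', zero_mul]
    have hw0 : w0 = 0 := by
      linear_combination n11 * hN0 - n01 * hN1 - n11 * hnw0def + n01 * hnw1def - w0 * hdN
    have hw1 : w1 = 0 := by
      linear_combination (-n10) * hN0 + n00 * hN1 + n10 * hnw0def - n00 * hnw1def - w1 * hdN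
    refine hMwne ⟨?_, ?_⟩
    · rw [hmw0def, hw0, hw1]; ring
    · rw [hmw1def, hw0, hw1]; ring
  set x : ℂ := m00 + m11 with hxdef
  set y : ℂ := n00 + n11 with hydef
  set T : Matrix (Fin 2) (Fin 2) ℂ := !![-mw0, w0; -mw1, w1] with hTdef
  have hdetT : det T ≠ 0 := by
    rw [hTdef, Matrix.det_fin_two_of]
    intro h
    apply hgood
    linear_combination -h
  have hmwc0 : mw0 = b⁻¹ * nw0 := by
    rw [hb01.1]; field_simp
  have hmwc1 : mw1 = b⁻¹ * nw1 := by
    rw [hb01.2]; field_simp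
  have h1 : (M : Matrix (Fin 2) (Fin 2) ℂ) * T
      = T * ((Asl x : SL2) : Matrix (Fin 2) (Fin 2) ℂ) := by
    show (M : Matrix (Fin 2) (Fin 2) ℂ) * T = T * !![x, -1; 1, 0]
    calc (M : Matrix (Fin 2) (Fin 2) ℂ) * T
        = !![m00, m01; m10, m11] * T := by rw [← Matrix.eta_fin_two]
      _ = T * !![x, -1; 1, 0] := key_h1 m00 m01 m10 m11 w0 w1 hdM
  have h2 : (N : Matrix (Fin 2) (Fin 2) ℂ) * T
      = T * ((Csl y b : SL2) : Matrix (Fin 2) (Fin 2) ℂ) := by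
    rw [Csl_coe hbne]
    calc (N : Matrix (Fin 2) (Fin 2) ℂ) * T
        = !![n00, n01; n10, n11] * T := by rw [← Matrix.eta_fin_two]
      _ = T * !![y, -b; b⁻¹, 0] :=
        key_h2 n00 n01 n10 n11 w0 w1 b b⁻¹ mw0 mw1 hdN hmwc0 hmwc1 hb01.1 hb01.2
  obtain ⟨S, c, hc⟩ := exists_S T hdetT
  have e1 : S⁻¹ * M * S = Asl x := conj_of hc h1
  have e2 : S⁻¹ * N * S = Csl y b := conj_of hc h2
  have hfm := hinv S⁻¹ M N
  rw [inv_inv, e1, e2] at hfm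
  have htr1 : trace (M : Matrix (Fin 2) (Fin 2) ℂ) = x := by
    rw [Matrix.trace_fin_two]
  have htr2 : trace (N : Matrix (Fin 2) (Fin 2) ℂ) = y := by
    rw [Matrix.trace_fin_two]
  have htr3 : trace ((M * N⁻¹ : SL2) : Matrix (Fin 2) (Fin 2) ℂ) = b + b⁻¹ := by
    have hM' : M = S * Asl x * S⁻¹ := by rw [← e1]; group
    have hN' : N = S * Csl y b * S⁻¹ := by rw [← e2]; group
    have hMN : (M * N⁻¹ : SL2) = S * (Asl x * (Csl y b)⁻¹) * S⁻¹ := by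
      rw [hM', hN']; group
    rw [hMN, trace_conj, third_trace x y b hbne]
  rw [htr1, htr2, htr3, ← hfm, ← hp x y b hbne]
  rfl


-- ## eigenvectors and commutators
lemma exists_root_pair (M N : Matrix (Fin 2) (Fin 2) ℂ) :
    ∃ w : Fin 2 → ℂ, ¬(w 0 = 0 ∧ w 1 = 0) ∧
      (M.mulVec w 1) * (N.mulVec w 0) = (M.mulVec w 0) * (N.mulVec w 1) := by
  obtain ⟨u, v, huv, hq⟩ := quad_root (M 1 0 * N 0 0 - M 0 0 * N 1 0)
      (M 1 0 * N 0 1 + M 1 1 * N 0 0 - M 0 0 * N 1 1 - M 0 1 * N 1 0)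
      (M 1 1 * N 0 1 - M 0 1 * N 1 1)
  refine ⟨![u, v], by simpa using huv, ?_⟩
  simp only [Matrix.mulVec, dotProduct, Fin.sum_univ_two,
    Matrix.cons_val_zero, Matrix.cons_val_one, Matrix.head_cons]
  linear_combination hq

lemma par {p0 p1 w0 w1 : ℂ} (hw : ¬(w0 = 0 ∧ w1 = 0)) (h : p0 * w1 = p1 * w0) :
    ∃ a : ℂ, p0 = a * w0 ∧ p1 = a * w1 := by
  by_cases h0 : w0 = 0
  · have h1 : w1 ≠ 0 := fun h' => hw ⟨h0, h'⟩
    refine ⟨p1 / w1, ?_, by field_simp⟩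
    rw [h0, mul_zero]
    have h2 : p0 * w1 = 0 := by rw [h, h0]; ring
    rcases mul_eq_zero.mp h2 with h' | h'
    · exact h'
    · exact absurd h' h1
  · refine ⟨p0 / w0, by field_simp, ?_⟩
    field_simp
    linear_combination -h

lemma tri (M N : SL2) (T : Matrix (Fin 2) (Fin 2) ℂ) (hdT : det T ≠ 0)
    (a pm dm β pn dn : ℂ)
    (hM : (M : Matrix (Fin 2) (Fin 2) ℂ) * T = T * !![a, pm; 0, dm])
    (hN : (N : Matrix (Fin 2) (Fin 2) ℂ) * T = T * !![β, pn; 0, dn]) :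
    trace ((M * N * M⁻¹ * N⁻¹ : SL2) : Matrix (Fin 2) (Fin 2) ℂ) = 2 := by
  have hdm : a * dm = 1 := by
    have h := congrArg det hM
    rw [det_mul, det_mul, M.2, one_mul, Matrix.det_fin_two_of] at h
    have h2 : T.det * (a * dm - pm * 0) = T.det * 1 := by rw [mul_one]; linear_combination -h
    have h3 := mul_left_cancel₀ hdT h2
    linear_combination h3
  have hdn : β * dn = 1 := by
    have h := congrArg det hN
    rw [det_mul, det_mul, N.2, one_mul, Matrix.det_fin_two_of] at h
    have h2 : T.det * (β * dn - pn * 0) = T.det * 1 := by rw [mul_one]; linear_combination -h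
    have h3 := mul_left_cancel₀ hdT h2
    linear_combination h3
  have hdm2 : det !![a, pm; 0, dm] = 1 := by
    rw [Matrix.det_fin_two_of]; linear_combination hdm
  have hdn2 : det !![β, pn; 0, dn] = 1 := by
    rw [Matrix.det_fin_two_of]; linear_combination hdn
  set Um : SL2 := ⟨!![a, pm; 0, dm], hdm2⟩ with hUmdef
  set Un : SL2 := ⟨!![β, pn; 0, dn], hdn2⟩ with hUndef
  obtain ⟨S, c, hc⟩ := exists_S T hdT
  have e1 : S⁻¹ * M * S = Um := conj_of hc hM
  have e2 : S⁻¹ * N * S = Un := conj_of hc hN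
  have hM' : M = S * Um * S⁻¹ := by rw [← e1]; group
  have hN' : N = S * Un * S⁻¹ := by rw [← e2]; group
  have hco : (M * N * M⁻¹ * N⁻¹ : SL2) = S * (Um * Un * Um⁻¹ * Un⁻¹) * S⁻¹ := by
    rw [hM', hN']; group
  rw [hco, trace_conj]
  have hUmi : ((Um⁻¹ : SL2) : Matrix (Fin 2) (Fin 2) ℂ) = !![dm, -pm; 0, a] := by
    rw [Matrix.SpecialLinearGroup.coe_inv, hUmdef, Matrix.adjugate_fin_two_of]
    norm_num
  have hUni : ((Un⁻¹ : SL2) : Matrix (Fin 2) (Fin 2) ℂ) = !![dn, -pn; 0, β] := by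
    rw [Matrix.SpecialLinearGroup.coe_inv, hUndef, Matrix.adjugate_fin_two_of]
    norm_num
  rw [Matrix.SpecialLinearGroup.coe_mul, Matrix.SpecialLinearGroup.coe_mul, Matrix.SpecialLinearGroup.coe_mul,
    hUmi, hUni]
  show trace (!![a, pm; 0, dm] * !![β, pn; 0, dn] * !![dm, -pm; 0, a] * !![dn, -pn; 0, β]) = 2
  rw [Matrix.mul_fin_two, Matrix.mul_fin_two, Matrix.mul_fin_two, Matrix.trace_fin_two_of]
  linear_combination (2 * β * dn) * hdm + 2 * hdn

lemma commutator_trace (M N : SL2) (w : Fin 2 → ℂ) (hw : ¬(w 0 = 0 ∧ w 1 = 0)) (a β : ℂ)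
    (hM0 : M.1.mulVec w 0 = a * w 0) (hM1 : M.1.mulVec w 1 = a * w 1)
    (hN0 : N.1.mulVec w 0 = β * w 0) (hN1 : N.1.mulVec w 1 = β * w 1) :
    trace ((M * N * M⁻¹ * N⁻¹ : SL2) : Matrix (Fin 2) (Fin 2) ℂ) = 2 := by
  have hMw : ∀ i, M.1.mulVec w i = M.1 i 0 * w 0 + M.1 i 1 * w 1 := by
    intro i; simp [Matrix.mulVec, dotProduct, Fin.sum_univ_two]
  have hNw : ∀ i, N.1.mulVec w i = N.1 i 0 * w 0 + N.1 i 1 * w 1 := by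
    intro i; simp [Matrix.mulVec, dotProduct, Fin.sum_univ_two]
  rw [hMw 0] at hM0
  rw [hMw 1] at hM1
  rw [hNw 0] at hN0
  rw [hNw 1] at hN1
  by_cases h0 : w 0 = 0
  · have h1 : w 1 ≠ 0 := fun h' => hw ⟨h0, h'⟩
    apply tri M N (!![w 0, 1; w 1, 0]) (by rw [Matrix.det_fin_two_of]; simpa using h1)
      a (M.1 1 0 / w 1) (M.1 0 0 - (M.1 1 0 / w 1) * w 0)
      β (N.1 1 0 / w 1) (N.1 0 0 - (N.1 1 0 / w 1) * w 0)
    · ext i j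
      rw [Matrix.mul_apply, Matrix.mul_apply, Fin.sum_univ_two, Fin.sum_univ_two]
      fin_cases i <;> fin_cases j <;> simp
      · linear_combination hM0
      · field_simp; try ring
      · linear_combination hM1
      · field_simp; try ring
    · ext i j
      rw [Matrix.mul_apply, Matrix.mul_apply, Fin.sum_univ_two, Fin.sum_univ_two]
      fin_cases i <;> fin_cases j <;> simp
      · linear_combination hN0
      · field_simp; try ring
      · linear_combination hN1
      · field_simp; try ring
  · apply tri M N (!![w 0, 0; w 1, 1]) (by rw [Matrix.det_fin_two_of]; simpa using h0)
      a (M.1 0 1 / w 0) (M.1 1 1 - (M.1 0 1 / w 0) * w 1)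
      β (N.1 0 1 / w 0) (N.1 1 1 - (N.1 0 1 / w 0) * w 1)
    · ext i j
      rw [Matrix.mul_apply, Matrix.mul_apply, Fin.sum_univ_two, Fin.sum_univ_two]
      fin_cases i <;> fin_cases j <;> simp
      · linear_combination hM0
      · field_simp; try ring
      · linear_combination hM1
      · field_simp; try ring
    · ext i j
      rw [Matrix.mul_apply, Matrix.mul_apply, Fin.sum_univ_two, Fin.sum_univ_two]
      fin_cases i <;> fin_cases j <;> simp
      · linear_combination hN0
      · field_simp; try ring
      · linear_combination hN1
      · field_simp; try ring

lemma good_or_comm (M N : SL2) :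
    (∃ w : Fin 2 → ℂ,
      (M.1.mulVec w 1) * (N.1.mulVec w 0) = (M.1.mulVec w 0) * (N.1.mulVec w 1)
        ∧ (M.1.mulVec w 0) * w 1 ≠ (M.1.mulVec w 1) * w 0)
    ∨ trace ((M * N * M⁻¹ * N⁻¹ : SL2) : Matrix (Fin 2) (Fin 2) ℂ) = 2 := by
  obtain ⟨w, hw0, hδ⟩ := exists_root_pair M.1 N.1
  by_cases hg : (M.1.mulVec w 0) * w 1 = (M.1.mulVec w 1) * w 0
  swap
  · exact Or.inl ⟨w, hδ, hg⟩
  right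
  obtain ⟨a, ha0, ha1⟩ := par hw0 hg
  have hdM : M.1 0 0 * M.1 1 1 - M.1 0 1 * M.1 1 0 = 1 := by
    have := M.2; rwa [Matrix.det_fin_two] at this
  have hMw : ∀ i, M.1.mulVec w i = M.1 i 0 * w 0 + M.1 i 1 * w 1 := by
    intro i; simp [Matrix.mulVec, dotProduct, Fin.sum_univ_two]
  have hane : a ≠ 0 := by
    intro h
    rw [h, zero_mul] at ha0 ha1
    rw [hMw 0] at ha0
    rw [hMw 1] at ha1
    apply hw0
    constructor
    · linear_combination M.1 1 1 * ha0 - M.1 0 1 * ha1 - w 0 * hdM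
    · linear_combination (-(M.1 1 0)) * ha0 + M.1 0 0 * ha1 - w 1 * hdM
  have hδ2 : (N.1.mulVec w 0) * w 1 = (N.1.mulVec w 1) * w 0 := by
    have h := hδ
    rw [ha0, ha1] at h
    have := mul_left_cancel₀ hane (by linear_combination h :
      a * ((N.1.mulVec w 0) * w 1) = a * ((N.1.mulVec w 1) * w 0))
    exact this
  obtain ⟨β, hb0, hb1⟩ := par hw0 hδ2
  exact commutator_trace M N w hw0 a β ha0 ha1 hb0 hb1


-- ## parametrisation of SL2 by elementary matrices
def usl (s : ℂ) : SL2 := ⟨!![1, s; 0, 1], by rw [Matrix.det_fin_two_of]; ring⟩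
def lsl (t : ℂ) : SL2 := ⟨!![1, 0; t, 1], by rw [Matrix.det_fin_two_of]; ring⟩

def UL (v : Fin 4 → ℂ) : SL2 := usl (v 0) * lsl (v 1) * usl (v 2) * lsl (v 3)

lemma UL_coe (v : Fin 4 → ℂ) : ((UL v : SL2) : Matrix (Fin 2) (Fin 2) ℂ)
    = !![1, v 0; 0, 1] * !![1, 0; v 1, 1] * !![1, v 2; 0, 1] * !![1, 0; v 3, 1] := by
  rw [UL, Matrix.SpecialLinearGroup.coe_mul, Matrix.SpecialLinearGroup.coe_mul,
    Matrix.SpecialLinearGroup.coe_mul]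
  rfl

lemma UL3 (M : SL2) (h : M.1 1 0 ≠ 0) :
    usl ((M.1 0 0 - 1) / M.1 1 0) * lsl (M.1 1 0) * usl ((M.1 1 1 - 1) / M.1 1 0) = M := by
  have hdM : M.1 0 0 * M.1 1 1 - M.1 0 1 * M.1 1 0 = 1 := by
    have := M.2; rwa [Matrix.det_fin_two] at this
  apply Subtype.ext
  show (!![1, (M.1 0 0 - 1) / M.1 1 0; 0, 1] * !![1, 0; M.1 1 0, 1]
    * !![1, (M.1 1 1 - 1) / M.1 1 0; 0, 1] : Matrix (Fin 2) (Fin 2) ℂ) = M.1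
  rw [Matrix.mul_fin_two, Matrix.mul_fin_two]
  ext i j
  fin_cases i <;> fin_cases j <;> simp
  · field_simp
    ring
  · field_simp
    linear_combination hdM
  · field_simp
    ring

lemma UL_surj (M : SL2) : ∃ v : Fin 4 → ℂ, UL v = M := by
  by_cases h : M.1 1 0 = 0
  · have hd : M.1 0 0 * M.1 1 1 = 1 := by
      have := M.2; rw [Matrix.det_fin_two, h] at this; linear_combination this
    have hM11 : M.1 1 1 ≠ 0 := by
      intro h0; rw [h0, mul_zero] at hd; exact zero_ne_one hd
    set M' : SL2 := M * lsl (-1) with hM'def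
    have hM'e : M'.1 = M.1 * !![1, 0; -1, 1] := by
      rw [hM'def, Matrix.SpecialLinearGroup.coe_mul]; rfl
    have hM'10 : M'.1 1 0 ≠ 0 := by
      have he : M'.1 1 0 = -(M.1 1 1) := by
        rw [hM'e, Matrix.mul_apply, Fin.sum_univ_two,
          show (!![1, 0; -1, 1] : Matrix (Fin 2) (Fin 2) ℂ) 0 0 = 1 from rfl,
          show (!![1, 0; -1, 1] : Matrix (Fin 2) (Fin 2) ℂ) 1 0 = -1 from rfl, h]
        ring
      rw [he]
      exact neg_ne_zero.mpr hM11
    refine ⟨![(M'.1 0 0 - 1) / M'.1 1 0, M'.1 1 0, (M'.1 1 1 - 1) / M'.1 1 0, 1], ?_⟩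
    show usl ((M'.1 0 0 - 1) / M'.1 1 0) * lsl (M'.1 1 0)
        * usl ((M'.1 1 1 - 1) / M'.1 1 0) * lsl 1 = M
    rw [UL3 M' hM'10, hM'def, mul_assoc]
    have hll : lsl (-1) * lsl (1 : ℂ) = 1 := by
      apply Subtype.ext
      show (!![1, 0; -1, 1] * !![1, 0; 1, 1] : Matrix (Fin 2) (Fin 2) ℂ) = 1
      rw [Matrix.mul_fin_two]
      norm_num
      exact (Matrix.one_fin_two).symm
    rw [hll, mul_one]
  · refine ⟨![(M.1 0 0 - 1) / M.1 1 0, M.1 1 0, (M.1 1 1 - 1) / M.1 1 0, 0], ?_⟩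
    show usl ((M.1 0 0 - 1) / M.1 1 0) * lsl (M.1 1 0)
        * usl ((M.1 1 1 - 1) / M.1 1 0) * lsl 0 = M
    have hl0 : lsl (0 : ℂ) = 1 := by
      apply Subtype.ext
      show (!![1, 0; 0, 1] : Matrix (Fin 2) (Fin 2) ℂ) = 1
      exact (Matrix.one_fin_two).symm
    rw [hl0, mul_one, UL3 M h]

-- ## map lemmas
lemma map_lit (φ : MvPolynomial (Fin 8) ℂ →+* ℂ) (a b c d : MvPolynomial (Fin 8) ℂ) :
    (!![a, b; c, d]).map φ = !![φ a, φ b; φ c, φ d] := by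
  ext i j
  fin_cases i <;> fin_cases j <;> simp [Matrix.map_apply]

lemma map_adj (φ : MvPolynomial (Fin 8) ℂ →+* ℂ)
    (A : Matrix (Fin 2) (Fin 2) (MvPolynomial (Fin 8) ℂ)) :
    (adjugate A).map φ = adjugate (A.map φ) := by
  have := RingHom.map_adjugate φ A
  simpa [RingHom.mapMatrix_apply] using this

lemma map_tr (φ : MvPolynomial (Fin 8) ℂ →+* ℂ)
    (A : Matrix (Fin 2) (Fin 2) (MvPolynomial (Fin 8) ℂ)) :
    φ (trace A) = trace (A.map φ) := by
  have := AddMonoidHom.map_trace φ A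
  simpa [AddMonoidHom.mapMatrix_apply] using this

-- ## polynomial matrices
def PM : Matrix (Fin 2) (Fin 2) (MvPolynomial (Fin 8) ℂ) :=
  !![1, X 0; 0, 1] * !![1, 0; X 1, 1] * !![1, X 2; 0, 1] * !![1, 0; X 3, 1]

def PN : Matrix (Fin 2) (Fin 2) (MvPolynomial (Fin 8) ℂ) :=
  !![1, X 4; 0, 1] * !![1, 0; X 5, 1] * !![1, X 6; 0, 1] * !![1, 0; X 7, 1]

lemma eval_PM (v : Fin 8 → ℂ) :
    PM.map (eval v) = ((UL ![v 0, v 1, v 2, v 3] : SL2) : Matrix (Fin 2) (Fin 2) ℂ) := by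
  rw [UL_coe, PM, Matrix.map_mul, Matrix.map_mul, Matrix.map_mul,
    map_lit, map_lit, map_lit, map_lit]
  simp

lemma eval_PN (v : Fin 8 → ℂ) :
    PN.map (eval v) = ((UL ![v 4, v 5, v 6, v 7] : SL2) : Matrix (Fin 2) (Fin 2) ℂ) := by
  rw [UL_coe, PN, Matrix.map_mul, Matrix.map_mul, Matrix.map_mul,
    map_lit, map_lit, map_lit, map_lit]
  simp

-- ## main existence statement
lemma main_eq (f : SL2 → SL2 → ℂ) (hf : IsRegularFn2 f)
    (hinv : ∀ g x₁ x₂ : SL2, f (g * x₁ * g⁻¹) (g * x₂ * g⁻¹) = f x₁ x₂) :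
    ∃ p : MvPolynomial (Fin 3) ℂ, ∀ M N : SL2,
      f M N = eval ![trace (M : Matrix (Fin 2) (Fin 2) ℂ),
        trace (N : Matrix (Fin 2) (Fin 2) ℂ),
        trace ((M * N⁻¹ : SL2) : Matrix (Fin 2) (Fin 2) ℂ)] p := by
  obtain ⟨p, hp⟩ := slice_poly f hf hinv
  obtain ⟨P, hP⟩ := hf
  refine ⟨p, ?_⟩
  set ent : Fin 8 → MvPolynomial (Fin 8) ℂ :=
    ![PM 0 0, PM 0 1, PM 1 0, PM 1 1, PN 0 0, PN 0 1, PN 1 0, PN 1 1] with hent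
  set FP : MvPolynomial (Fin 8) ℂ := bind₁ ent P with hFP
  set GP : MvPolynomial (Fin 8) ℂ :=
    bind₁ ![trace PM, trace PN, trace (PM * adjugate PN)] p with hGP
  set DC : MvPolynomial (Fin 8) ℂ :=
    trace (PM * PN * adjugate PM * adjugate PN) - 2 with hDC
  have hevF : ∀ v : Fin 8 → ℂ,
      eval v FP = f (UL ![v 0, v 1, v 2, v 3]) (UL ![v 4, v 5, v 6, v 7]) := by
    intro v
    rw [hFP, eval_bind₁, hP]
    refine eval_congr _ _ _ ?_
    funext i
    have hm := eval_PM v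
    have hn := eval_PN v
    fin_cases i
    · show eval v (PM 0 0)
          = ((UL ![v 0, v 1, v 2, v 3] : SL2) : Matrix (Fin 2) (Fin 2) ℂ) 0 0
      rw [← hm]; rfl
    · show eval v (PM 0 1)
          = ((UL ![v 0, v 1, v 2, v 3] : SL2) : Matrix (Fin 2) (Fin 2) ℂ) 0 1
      rw [← hm]; rfl
    · show eval v (PM 1 0)
          = ((UL ![v 0, v 1, v 2, v 3] : SL2) : Matrix (Fin 2) (Fin 2) ℂ) 1 0
      rw [← hm]; rfl
    · show eval v (PM 1 1)
          = ((UL ![v 0, v 1, v 2, v 3] : SL2) : Matrix (Fin 2) (Fin 2) ℂ) 1 1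
      rw [← hm]; rfl
    · show eval v (PN 0 0)
          = ((UL ![v 4, v 5, v 6, v 7] : SL2) : Matrix (Fin 2) (Fin 2) ℂ) 0 0
      rw [← hn]; rfl
    · show eval v (PN 0 1)
          = ((UL ![v 4, v 5, v 6, v 7] : SL2) : Matrix (Fin 2) (Fin 2) ℂ) 0 1
      rw [← hn]; rfl
    · show eval v (PN 1 0)
          = ((UL ![v 4, v 5, v 6, v 7] : SL2) : Matrix (Fin 2) (Fin 2) ℂ) 1 0
      rw [← hn]; rfl
    · show eval v (PN 1 1)
          = ((UL ![v 4, v 5, v 6, v 7] : SL2) : Matrix (Fin 2) (Fin 2) ℂ) 1 1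
      rw [← hn]; rfl
  have hevG : ∀ v : Fin 8 → ℂ, eval v GP
      = eval ![trace ((UL ![v 0, v 1, v 2, v 3] : SL2) : Matrix (Fin 2) (Fin 2) ℂ),
          trace ((UL ![v 4, v 5, v 6, v 7] : SL2) : Matrix (Fin 2) (Fin 2) ℂ),
          trace ((UL ![v 0, v 1, v 2, v 3] * (UL ![v 4, v 5, v 6, v 7])⁻¹ : SL2)
            : Matrix (Fin 2) (Fin 2) ℂ)] p := by
    intro v
    rw [hGP, eval_bind₁]
    refine eval_congr _ _ _ ?_
    funext i
    have hm := eval_PM v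
    have hn := eval_PN v
    fin_cases i
    · show eval v (trace PM)
          = trace ((UL ![v 0, v 1, v 2, v 3] : SL2) : Matrix (Fin 2) (Fin 2) ℂ)
      rw [map_tr, hm]
    · show eval v (trace PN)
          = trace ((UL ![v 4, v 5, v 6, v 7] : SL2) : Matrix (Fin 2) (Fin 2) ℂ)
      rw [map_tr, hn]
    · show eval v (trace (PM * adjugate PN))
          = trace ((UL ![v 0, v 1, v 2, v 3] * (UL ![v 4, v 5, v 6, v 7])⁻¹ : SL2)
            : Matrix (Fin 2) (Fin 2) ℂ)
      rw [map_tr, Matrix.map_mul, map_adj, hm, hn, Matrix.SpecialLinearGroup.coe_mul,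
        Matrix.SpecialLinearGroup.coe_inv]
  have hevDC : ∀ v : Fin 8 → ℂ, eval v DC
      = trace ((UL ![v 0, v 1, v 2, v 3] * UL ![v 4, v 5, v 6, v 7]
          * (UL ![v 0, v 1, v 2, v 3])⁻¹ * (UL ![v 4, v 5, v 6, v 7])⁻¹ : SL2)
          : Matrix (Fin 2) (Fin 2) ℂ) - 2 := by
    intro v
    have hco : ((UL ![v 0, v 1, v 2, v 3] * UL ![v 4, v 5, v 6, v 7]
          * (UL ![v 0, v 1, v 2, v 3])⁻¹ * (UL ![v 4, v 5, v 6, v 7])⁻¹ : SL2)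
          : Matrix (Fin 2) (Fin 2) ℂ)
        = ((UL ![v 0, v 1, v 2, v 3] : SL2) : Matrix (Fin 2) (Fin 2) ℂ)
          * ((UL ![v 4, v 5, v 6, v 7] : SL2) : Matrix (Fin 2) (Fin 2) ℂ)
          * adjugate ((UL ![v 0, v 1, v 2, v 3] : SL2) : Matrix (Fin 2) (Fin 2) ℂ)
          * adjugate ((UL ![v 4, v 5, v 6, v 7] : SL2) : Matrix (Fin 2) (Fin 2) ℂ) := by
      rw [Matrix.SpecialLinearGroup.coe_mul, Matrix.SpecialLinearGroup.coe_mul,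
        Matrix.SpecialLinearGroup.coe_mul, Matrix.SpecialLinearGroup.coe_inv,
        Matrix.SpecialLinearGroup.coe_inv]
    rw [hDC, map_sub, map_tr, Matrix.map_mul, Matrix.map_mul, Matrix.map_mul,
      map_adj, map_adj, eval_PM v, eval_PN v, hco]
    norm_num
  have hDCne : DC ≠ 0 := by
    intro h0
    have h1 := congrArg (eval ![1, 0, 0, 0, 0, 1, 0, 0]) h0
    rw [map_zero, hevDC] at h1
    have hA : ((UL ![(![1, 0, 0, 0, 0, 1, 0, 0] : Fin 8 → ℂ) 0,
        (![1, 0, 0, 0, 0, 1, 0, 0] : Fin 8 → ℂ) 1, (![1, 0, 0, 0, 0, 1, 0, 0] : Fin 8 → ℂ) 2,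
        (![1, 0, 0, 0, 0, 1, 0, 0] : Fin 8 → ℂ) 3] : SL2) : Matrix (Fin 2) (Fin 2) ℂ)
        = !![1, 1; 0, 1] := by
      rw [UL_coe]
      show (!![1, 1; 0, 1] * !![1, 0; 0, 1] * !![1, 0; 0, 1] * !![1, 0; 0, 1]
        : Matrix (Fin 2) (Fin 2) ℂ) = !![1, 1; 0, 1]
      rw [Matrix.mul_fin_two, Matrix.mul_fin_two, Matrix.mul_fin_two]
      norm_num
    have hB : ((UL ![(![1, 0, 0, 0, 0, 1, 0, 0] : Fin 8 → ℂ) 4,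
        (![1, 0, 0, 0, 0, 1, 0, 0] : Fin 8 → ℂ) 5, (![1, 0, 0, 0, 0, 1, 0, 0] : Fin 8 → ℂ) 6,
        (![1, 0, 0, 0, 0, 1, 0, 0] : Fin 8 → ℂ) 7] : SL2) : Matrix (Fin 2) (Fin 2) ℂ)
        = !![1, 0; 1, 1] := by
      rw [UL_coe]
      show (!![1, 0; 0, 1] * !![1, 0; 1, 1] * !![1, 0; 0, 1] * !![1, 0; 0, 1]
        : Matrix (Fin 2) (Fin 2) ℂ) = !![1, 0; 1, 1]
      rw [Matrix.mul_fin_two, Matrix.mul_fin_two, Matrix.mul_fin_two]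
      norm_num
    rw [Matrix.SpecialLinearGroup.coe_mul, Matrix.SpecialLinearGroup.coe_mul, Matrix.SpecialLinearGroup.coe_mul,
      Matrix.SpecialLinearGroup.coe_inv, Matrix.SpecialLinearGroup.coe_inv, hA, hB] at h1
    rw [Matrix.adjugate_fin_two_of, Matrix.adjugate_fin_two_of] at h1
    rw [Matrix.mul_fin_two, Matrix.mul_fin_two, Matrix.mul_fin_two,
      Matrix.trace_fin_two_of] at h1
    norm_num at h1
  have hFG : FP - GP = 0 := by
    apply dense _ DC hDCne
    intro v hv
    rw [map_sub, hevF v, hevG v]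
    rcases good_or_comm (UL ![v 0, v 1, v 2, v 3]) (UL ![v 4, v 5, v 6, v 7])
      with ⟨w, hδ, hg⟩ | h2
    · rw [reduce f hinv p hp _ _ w hδ hg, sub_self]
    · exfalso
      apply hv
      rw [hevDC v, h2]
      ring
  intro M N
  obtain ⟨vm, hvm⟩ := UL_surj M
  obtain ⟨vn, hvn⟩ := UL_surj N
  have h1 := congrArg
    (eval ![vm 0, vm 1, vm 2, vm 3, vn 0, vn 1, vn 2, vn 3]) hFG
  rw [map_sub, map_zero, hevF, hevG] at h1
  have hv4 : (![(![vm 0, vm 1, vm 2, vm 3, vn 0, vn 1, vn 2, vn 3] : Fin 8 → ℂ) 0,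
      (![vm 0, vm 1, vm 2, vm 3, vn 0, vn 1, vn 2, vn 3] : Fin 8 → ℂ) 1,
      (![vm 0, vm 1, vm 2, vm 3, vn 0, vn 1, vn 2, vn 3] : Fin 8 → ℂ) 2,
      (![vm 0, vm 1, vm 2, vm 3, vn 0, vn 1, vn 2, vn 3] : Fin 8 → ℂ) 3] : Fin 4 → ℂ)
      = vm := by
    funext i; fin_cases i <;> rfl
  have hv4' : (![(![vm 0, vm 1, vm 2, vm 3, vn 0, vn 1, vn 2, vn 3] : Fin 8 → ℂ) 4,
      (![vm 0, vm 1, vm 2, vm 3, vn 0, vn 1, vn 2, vn 3] : Fin 8 → ℂ) 5,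
      (![vm 0, vm 1, vm 2, vm 3, vn 0, vn 1, vn 2, vn 3] : Fin 8 → ℂ) 6,
      (![vm 0, vm 1, vm 2, vm 3, vn 0, vn 1, vn 2, vn 3] : Fin 8 → ℂ) 7] : Fin 4 → ℂ)
      = vn := by
    funext i; fin_cases i <;> rfl
  rw [hv4, hv4', hvm, hvn] at h1
  exact sub_eq_zero.mp h1


lemma trace_Asl (x : ℂ) : trace ((Asl x : SL2) : Matrix (Fin 2) (Fin 2) ℂ) = x := by
  show trace (!![x, -1; 1, 0] : Matrix (Fin 2) (Fin 2) ℂ) = x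
  rw [Matrix.trace_fin_two_of]; ring

lemma trace_Csl (y b : ℂ) (hb : b ≠ 0) :
    trace ((Csl y b : SL2) : Matrix (Fin 2) (Fin 2) ℂ) = y := by
  rw [Csl_coe hb, Matrix.trace_fin_two_of]; ring

end FKV


/-- (Fricke–Klein–Vogt) Every regular function on SL(2,ℂ) × SL(2,ℂ) invariant under
simultaneous conjugation is, in a unique way, a polynomial in the three trace variables
`tr(x₁)`, `tr(x₂)`, `tr(x₁x₂⁻¹)`. -/
theorem fricke_klein_vogt (f : SL2 → SL2 → ℂ) (hf : IsRegularFn2 f)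
    (hinv : ∀ g x₁ x₂ : SL2, f (g * x₁ * g⁻¹) (g * x₂ * g⁻¹) = f x₁ x₂) :
    ∃! p : MvPolynomial (Fin 3) ℂ,
      ∀ x₁ x₂ : SL2, f x₁ x₂ = MvPolynomial.eval
        ![Matrix.trace (x₁ : Matrix (Fin 2) (Fin 2) ℂ),
          Matrix.trace (x₂ : Matrix (Fin 2) (Fin 2) ℂ),
          Matrix.trace ((x₁ * x₂⁻¹ : SL2) : Matrix (Fin 2) (Fin 2) ℂ)] p := by
  obtain ⟨p, hp⟩ := FKV.main_eq f hf hinv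
  refine ⟨p, fun x₁ x₂ => hp x₁ x₂, ?_⟩
  intro p' hp'
  apply MvPolynomial.funext
  intro v
  obtain ⟨b, hb, hbv⟩ := FKV.exists_b (v 2)
  have h1 := hp' (FKV.Asl (v 0)) (FKV.Csl (v 1) b)
  have h2 := hp (FKV.Asl (v 0)) (FKV.Csl (v 1) b)
  rw [FKV.trace_Asl, FKV.trace_Csl _ _ hb, FKV.third_trace _ _ _ hb, hbv,
    FKV.vec3_eta v] at h1 h2
  exact h1.symm.trans h2

end
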